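/- arXiv:2109.10354 — 2 statements merged into one kernel-verified Lean document; each statement's English description precedes it below -/
import Mathlib

section
/- For every real number x and every 0 < λ ≤ λ*, one has e^{λx} - λx - 1 ≤ (λ²/(λ*)²) (e^{λ*|x|} - λ*|x| - 1). -/
/-! Both sides are power series whose terms vanish below degree two, so it suffices to compare
them coefficientwise: `(λx)^k ≤ (λ|x|)^k`, and for `k ≥ 2` also
`λ^k ≤ (λ/λ*)^2 (λ*)^k` since `λ ≤ λ*`. -/

open Nat

namespace Real

lemma exp_sub_sub_one_eq_tsum (y : ℝ) :
    exp y - y - 1 = ∑' n : ℕ, y ^ (n + 2) / (n + 2)! := by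
  have exp_eq_tsum : exp y = ∑' n : ℕ, y ^ n / n ! := by
    rw [exp_eq_exp_ℝ, NormedSpace.exp_eq_tsum_div]
  rw [exp_eq_tsum, ← (summable_pow_div_factorial y).sum_add_tsum_nat_add 2]
  simp only [Finset.sum_range_succ, Finset.sum_range_zero, pow_zero, pow_one, factorial_zero,
    factorial_one, cast_one, div_one]
  ring

lemma exp_sub_sub_one_le_mul_of_pow_le {y z c : ℝ} (h : ∀ n : ℕ, y ^ (n + 2) ≤ c * z ^ (n + 2)) :
    exp y - y - 1 ≤ c * (exp z - z - 1) := by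
  have summable_tail (w : ℝ) : Summable fun n : ℕ => w ^ (n + 2) / (n + 2)! :=
    (summable_nat_add_iff 2).2 (summable_pow_div_factorial w)
  rw [exp_sub_sub_one_eq_tsum, exp_sub_sub_one_eq_tsum, ← tsum_mul_left]
  refine (summable_tail y).tsum_le_tsum (fun n => ?_) ((summable_tail z).mul_left c)
  rw [mul_div_assoc']
  gcongr
  exact h n

lemma exp_sub_sub_one_le_abs (y : ℝ) : exp y - y - 1 ≤ exp |y| - |y| - 1 := by
  simpa only [one_mul] using exp_sub_sub_one_le_mul_of_pow_le (c := 1) fun n => by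
    rw [one_mul, ← abs_pow]
    exact le_abs_self _

lemma exp_mul_sub_sub_one_le {a b t : ℝ} (ha : 0 < a) (hab : a ≤ b) (ht : 0 ≤ t) :
    exp (a * t) - a * t - 1 ≤ a ^ 2 / b ^ 2 * (exp (b * t) - b * t - 1) := by
  have hb : 0 < b := ha.trans_le hab
  refine exp_sub_sub_one_le_mul_of_pow_le fun n => ?_
  calc (a * t) ^ (n + 2) = a ^ n * (a ^ 2 * t ^ (n + 2)) := by ring
    _ ≤ b ^ n * (a ^ 2 * t ^ (n + 2)) := by gcongr
    _ = a ^ 2 / b ^ 2 * (b * t) ^ (n + 2) := by field_simp; ring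

end Real

theorem stmt_4_general (x lstar l : ℝ) (hl : 0 < l) (hle : l ≤ lstar) :
    Real.exp (l * x) - l * x - 1 ≤
      (l ^ 2 / lstar ^ 2) * (Real.exp (lstar * |x|) - lstar * |x| - 1) :=
  calc Real.exp (l * x) - l * x - 1 ≤ Real.exp (l * |x|) - l * |x| - 1 := by
        simpa only [abs_mul, abs_of_pos hl] using Real.exp_sub_sub_one_le_abs (l * x)
    _ ≤ _ := Real.exp_mul_sub_sub_one_le hl hle (abs_nonneg x)

theorem stmt_4 (x lstar l : ℝ) (hstar : 0 < lstar) (hl : 0 < l) (hle : l ≤ lstar) :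
    Real.exp (l * x) - l * x - 1 ≤
      (l ^ 2 / lstar ^ 2) * (Real.exp (lstar * |x|) - lstar * |x| - 1) :=
  stmt_4_general x lstar l hl hle
end

section
/- Let X, Y be real random variables with ‖X‖_q ≤ μ and ‖Y‖_q ≤ μ for some q > 2, and let ν > 0 with truncations X̃ = max(min(X,ν),-ν), Ỹ = max(min(Y,ν),-ν). Then |E[X̃Ỹ] - E[XY]| ≤ 2 μ^q ν^{2-q}. -/
/-!
With `x̃ = max (min x ν) (-ν)`, the pointwise bound `|x̃ ỹ - x y| ≤ (|x| ^ q + |y| ^ q) ν ^ (2 - q)`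
integrates to the claim, since `E|X| ^ q, E|Y| ^ q ≤ m ^ q`. For it, assume `|x| ≤ |y|` and split
`x̃ ỹ - x y = ỹ (x̃ - x) + x (ỹ - y)`. A difference `z̃ - z` vanishes unless `|z| > ν`, and then
`|z̃ - z| ≤ |z|` while its weight (`|ỹ| ≤ ν`, resp. `|x| ≤ |y|`) is at most `|z|`; so each term is
at most `|z| ^ 2 ≤ |z| ^ q ν ^ (2 - q)`, as `q ≥ 2` and `|z| ≥ ν`.
-/

open MeasureTheory

lemma rpow_mul_rpow_sub_le_of_le {a ν p q r : ℝ} (hν : 0 < ν) (ha : ν ≤ a) (hpq : p ≤ q) :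
    a ^ p * ν ^ (r - p) ≤ a ^ q * ν ^ (r - q) := by
  have ha0 : 0 < a := hν.trans_le ha
  calc a ^ p * ν ^ (r - p) = a ^ p * ν ^ (q - p) * ν ^ (r - q) := by
        rw [mul_assoc, ← Real.rpow_add hν]; ring_nf
    _ ≤ a ^ p * a ^ (q - p) * ν ^ (r - q) := by
        gcongr
    _ = a ^ q * ν ^ (r - q) := by
        rw [← Real.rpow_add ha0]; ring_nf

section Truncation

variable {ν : ℝ}

lemma abs_max_min_le (hν : 0 ≤ ν) (x : ℝ) : |max (min x ν) (-ν)| ≤ ν :=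
  abs_le.2 ⟨le_max_right _ _, max_le (min_le_right _ _) (by linarith)⟩

lemma max_min_eq_self {x : ℝ} (hx : |x| ≤ ν) : max (min x ν) (-ν) = x := by
  rw [abs_le] at hx
  rw [min_eq_left hx.2, max_eq_left hx.1]

lemma abs_max_min_sub_le (hν : 0 ≤ ν) (x : ℝ) : |max (min x ν) (-ν) - x| ≤ |x| := by
  rcases le_total 0 x with hx | hx
  · rw [abs_of_nonneg hx, abs_le]
    constructor <;> cases min_cases x ν <;> cases max_cases (min x ν) (-ν) <;> linarith
  · rw [abs_of_nonpos hx, abs_le]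
    constructor <;> cases min_cases x ν <;> cases max_cases (min x ν) (-ν) <;> linarith

lemma mul_abs_max_min_sub_le {q c y : ℝ} (hν : 0 < ν) (hq : 2 ≤ q)
    (hcy : c ≤ max ν |y|) : c * |max (min y ν) (-ν) - y| ≤ |y| ^ q * ν ^ (2 - q) := by
  rcases le_or_gt |y| ν with hy | hy
  · rw [max_min_eq_self hy, sub_self, abs_zero, mul_zero]
    positivity
  · rw [max_eq_right hy.le] at hcy
    calc c * |max (min y ν) (-ν) - y| ≤ |y| ^ (2 : ℝ) * ν ^ (2 - 2 : ℝ) := by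
          rw [sub_self, Real.rpow_zero, mul_one, Real.rpow_two, sq]
          exact mul_le_mul hcy (abs_max_min_sub_le hν.le y) (abs_nonneg _) (abs_nonneg _)
      _ ≤ |y| ^ q * ν ^ (2 - q) := rpow_mul_rpow_sub_le_of_le hν hy.le hq

lemma abs_max_min_mul_max_min_sub_mul_le {q : ℝ} (hν : 0 < ν) (hq : 2 ≤ q) (x y : ℝ) :
    |max (min x ν) (-ν) * max (min y ν) (-ν) - x * y| ≤ (|x| ^ q + |y| ^ q) * ν ^ (2 - q) := by
  wlog hxy : |x| ≤ |y| generalizing x y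
  · rw [mul_comm x, mul_comm (max (min x ν) (-ν)), add_comm]
    exact this y x (le_of_not_ge hxy)
  set x' := max (min x ν) (-ν)
  set y' := max (min y ν) (-ν)
  have hy' : |y'| ≤ max ν |x| := (abs_max_min_le hν.le y).trans (le_max_left _ _)
  calc |x' * y' - x * y| ≤ |y'| * |x' - x| + |x| * |y' - y| := by
        rw [← abs_mul, ← abs_mul, show x' * y' - x * y = y' * (x' - x) + x * (y' - y) by ring]
        exact abs_add_le _ _
    _ ≤ (|x| ^ q + |y| ^ q) * ν ^ (2 - q) := by
        rw [add_mul]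
        exact add_le_add (mul_abs_max_min_sub_le hν hq hy')
          (mul_abs_max_min_sub_le hν hq (hxy.trans (le_max_right _ _)))

end Truncation

lemma abs_integral_max_min_mul_max_min_sub_le {Ω : Type*} [MeasurableSpace Ω] {μ : Measure Ω}
    [IsFiniteMeasure μ] {X Y : Ω → ℝ} {q ν : ℝ} (hX : AEMeasurable X μ) (hY : AEMeasurable Y μ)
    (hq : 2 ≤ q) (hν : 0 < ν) (hintX : Integrable (fun ω => |X ω| ^ q) μ)
    (hintY : Integrable (fun ω => |Y ω| ^ q) μ) :
    |(∫ ω, max (min (X ω) ν) (-ν) * max (min (Y ω) ν) (-ν) ∂μ) - ∫ ω, X ω * Y ω ∂μ| ≤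
      ((∫ ω, |X ω| ^ q ∂μ) + ∫ ω, |Y ω| ^ q ∂μ) * ν ^ (2 - q) := by
  set T := fun ω => max (min (X ω) ν) (-ν) * max (min (Y ω) ν) (-ν)
  have hT_meas : AEMeasurable T μ := by
    have h : Measurable fun z : ℝ => max (min z ν) (-ν) := by fun_prop
    exact (h.comp_aemeasurable hX).mul (h.comp_aemeasurable hY)
  have hT : Integrable T μ := by
    refine (integrable_const (ν * ν)).mono' hT_meas.aestronglyMeasurable (ae_of_all _ fun ω => ?_)
    rw [Real.norm_eq_abs, abs_mul]
    exact mul_le_mul (abs_max_min_le hν.le _) (abs_max_min_le hν.le _) (abs_nonneg _) hν.le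
  have hbound : ∀ ω, |T ω - X ω * Y ω| ≤ (|X ω| ^ q + |Y ω| ^ q) * ν ^ (2 - q) := fun ω =>
    abs_max_min_mul_max_min_sub_mul_le hν hq _ _
  have hdom : Integrable (fun ω => (|X ω| ^ q + |Y ω| ^ q) * ν ^ (2 - q)) μ :=
    (hintX.add hintY).mul_const _
  have hdiff : Integrable (fun ω => T ω - X ω * Y ω) μ :=
    hdom.mono' (hT_meas.sub (hX.mul hY)).aestronglyMeasurable (ae_of_all _ hbound)
  have hXY : Integrable (fun ω => X ω * Y ω) μ :=
    (hT.sub hdiff).congr (ae_of_all _ fun ω => sub_sub_cancel (T ω) (X ω * Y ω))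
  calc |(∫ ω, T ω ∂μ) - ∫ ω, X ω * Y ω ∂μ| = |∫ ω, T ω - X ω * Y ω ∂μ| := by
        rw [integral_sub hT hXY]
    _ ≤ ∫ ω, |T ω - X ω * Y ω| ∂μ := abs_integral_le_integral_abs
    _ ≤ ∫ ω, (|X ω| ^ q + |Y ω| ^ q) * ν ^ (2 - q) ∂μ := integral_mono hdiff.abs hdom hbound
    _ = ((∫ ω, |X ω| ^ q ∂μ) + ∫ ω, |Y ω| ^ q ∂μ) * ν ^ (2 - q) := by
        rw [integral_mul_const, integral_add hintX hintY]

theorem stmt_10_general {Ω : Type*} [MeasurableSpace Ω] (μ : Measure Ω) [IsProbabilityMeasure μ]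
    (X Y : Ω → ℝ) (hX : AEMeasurable X μ) (hY : AEMeasurable Y μ)
    (q m ν : ℝ) (hq : 2 < q) (hν : 0 < ν)
    (hintX : Integrable (fun ω => |X ω| ^ q) μ)
    (hintY : Integrable (fun ω => |Y ω| ^ q) μ)
    (hmomX : (∫ ω, |X ω| ^ q ∂μ) ^ (1 / q) ≤ m)
    (hmomY : (∫ ω, |Y ω| ^ q ∂μ) ^ (1 / q) ≤ m) :
    |(∫ ω, max (min (X ω) ν) (-ν) * max (min (Y ω) ν) (-ν) ∂μ) - ∫ ω, X ω * Y ω ∂μ| ≤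
      2 * m ^ q * ν ^ (2 - q) := by
  have moment_le : ∀ Z : Ω → ℝ, (∫ ω, |Z ω| ^ q ∂μ) ^ (1 / q) ≤ m → ∫ ω, |Z ω| ^ q ∂μ ≤ m ^ q := by
    intro Z hZ
    have hnn : 0 ≤ ∫ ω, |Z ω| ^ q ∂μ := integral_nonneg fun ω => by positivity
    rw [one_div] at hZ
    exact (Real.rpow_inv_le_iff_of_pos hnn ((Real.rpow_nonneg hnn _).trans hZ) (by linarith)).1 hZ
  calc _ ≤ ((∫ ω, |X ω| ^ q ∂μ) + ∫ ω, |Y ω| ^ q ∂μ) * ν ^ (2 - q) :=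
        abs_integral_max_min_mul_max_min_sub_le hX hY hq.le hν hintX hintY
    _ ≤ (m ^ q + m ^ q) * ν ^ (2 - q) := by
        gcongr
        exacts [moment_le X hmomX, moment_le Y hmomY]
    _ = 2 * m ^ q * ν ^ (2 - q) := by ring

theorem stmt_10 {Ω : Type*} [MeasurableSpace Ω] (μ : Measure Ω) [IsProbabilityMeasure μ]
    (X Y : Ω → ℝ) (hX : AEMeasurable X μ) (hY : AEMeasurable Y μ)
    (q m ν : ℝ) (hq : 2 < q) (hm : 0 < m) (hν : 0 < ν)
    (hintX : Integrable (fun ω => |X ω| ^ q) μ)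
    (hintY : Integrable (fun ω => |Y ω| ^ q) μ)
    (hintXY : Integrable (fun ω => X ω * Y ω) μ)
    (hmomX : (∫ ω, |X ω| ^ q ∂μ) ^ (1 / q) ≤ m)
    (hmomY : (∫ ω, |Y ω| ^ q ∂μ) ^ (1 / q) ≤ m) :
    |(∫ ω, max (min (X ω) ν) (-ν) * max (min (Y ω) ν) (-ν) ∂μ) - ∫ ω, X ω * Y ω ∂μ| ≤
      2 * m ^ q * ν ^ (2 - q) :=
  stmt_10_general μ X Y hX hY q m ν hq hν hintX hintY hmomX hmomY
end
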